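/- arXiv:1009.1865 — 4 statements merged into one kernel-verified Lean document; each statement's English description precedes it below -/
import Mathlib

section
/- Let h ≥ 1 be an integer, a a real number, and N a natural number. Then Σ_{0 ≤ k ≤ ⌊N/2⌋} binom(N,2k) a^{2k} (-1)^k (h)_k / (N+1)^{h+k} = (1/(h-1)!) ∫₀^∞ t^{h-1} e^{-t} · (1/2)[((1 + i a √t) e^{-t})^N + ((1 − i a √t) e^{-t})^N] dt, where (h)_k = h(h+1)···(h+k-1) is the rising factorial. -/
open Finset MeasureTheory Complex
open scoped Nat

/-!
Expanding both powers by the binomial theorem, the odd powers of `i a √t` cancel and the bracket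
becomes `∑ binom(N, 2k) (-a² t)ᵏ e^{-Nt}`. Integrating term by term against `t^{h-1} e^{-t}`
gives `(h-1+k)! / (N+1)^{h+k}` by the Gamma integral, and `(h-1+k)! / (h-1)! = (h)ₖ`.
-/

/-- Rising factorial `h (h+1) ⋯ (h+k-1)`. -/
def rising (h k : ℕ) : ℕ := ∏ i ∈ Finset.range k, (h + i)

lemma rising_eq_ascFactorial (h k : ℕ) : rising h k = h.ascFactorial k :=
  (Nat.ascFactorial_eq_prod_range h k).symm

theorem Finset.sum_range_succ_eq_sum_two_mul_of_odd_eq_zero {M : Type*} [AddCommMonoid M]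
    (n : ℕ) (g : ℕ → M) (hg : ∀ j, Odd j → g j = 0) :
    ∑ j ∈ range (n + 1), g j = ∑ k ∈ range (n / 2 + 1), g (2 * k) := by
  rw [← sum_image (g := (2 * ·)) fun _ _ _ _ h => by simpa using h]
  refine (sum_subset (fun j hj => ?_) fun j _ hj => hg j ?_).symm
  · obtain ⟨k, hk, rfl⟩ := mem_image.mp hj
    simp only [mem_range] at hk ⊢
    omega
  · refine Nat.not_even_iff_odd.mp fun ⟨k, hk⟩ => hj (mem_image.mpr ⟨k, ?_, by omega⟩)
    simp only [mem_range] at *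
    omega

theorem add_pow_add_sub_pow {R : Type*} [CommRing R] (z : R) (N : ℕ) :
    (1 + z) ^ N + (1 - z) ^ N =
      2 * ∑ k ∈ range (N / 2 + 1), (N.choose (2 * k) : R) * z ^ (2 * k) := by
  rw [add_comm 1 z, sub_eq_add_neg, add_comm 1 (-z), add_pow, add_pow, ← sum_add_distrib,
    sum_range_succ_eq_sum_two_mul_of_odd_eq_zero, mul_sum]
  · refine sum_congr rfl fun k _ => ?_
    rw [Even.neg_pow ⟨k, two_mul k⟩]
    ring
  · intro j hj
    rw [Odd.neg_pow hj]
    ring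

theorem integral_pow_mul_exp_neg_mul_Ioi (m : ℕ) {r : ℝ} (hr : 0 < r) :
    ∫ t : ℝ in Set.Ioi 0, (t : ℂ) ^ m * exp (-(r * t)) = m ! / (r : ℂ) ^ (m + 1) := by
  have hm : (0 : ℝ) < ((m + 1 : ℕ) : ℂ).re := by simp; positivity
  have := integral_cpow_mul_exp_neg_mul_Ioi hm hr
  simp only [cpow_natCast, Nat.cast_add_one, add_sub_cancel_right, Gamma_nat_eq_factorial] at this
  rw [this, ← Nat.cast_add_one, cpow_natCast, div_pow, one_pow, one_div_mul_eq_div]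

theorem integrableOn_pow_mul_exp_neg_mul_Ioi (m : ℕ) {r : ℝ} (hr : 0 < r) :
    IntegrableOn (fun t : ℝ => (t : ℂ) ^ m * exp (-(r * t))) (Set.Ioi 0) :=
  Integrable.of_integral_ne_zero <| by
    rw [integral_pow_mul_exp_neg_mul_Ioi m hr]
    exact div_ne_zero (Nat.cast_ne_zero.mpr m.factorial_ne_zero)
      (pow_ne_zero _ (ofReal_ne_zero.mpr hr.ne'))

theorem half_mul_add_pow_add_sub_pow_I_mul_sqrt (a : ℝ) {t : ℝ} (ht : 0 ≤ t) (e : ℂ) (N : ℕ) :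
    (1 / 2 : ℂ) * (((1 + I * a * (√t : ℝ)) * e) ^ N + ((1 - I * a * (√t : ℝ)) * e) ^ N) =
      ∑ k ∈ range (N / 2 + 1),
        (N.choose (2 * k) : ℂ) * a ^ (2 * k) * (-1) ^ k * (t : ℂ) ^ k * e ^ N := by
  have hsq : (I * a * (√t : ℝ)) ^ 2 = -(a ^ 2 * t) := by
    rw [mul_pow, mul_pow, I_sq, ← ofReal_pow √t, Real.sq_sqrt ht]
    ring
  rw [mul_pow, mul_pow, ← add_mul, add_pow_add_sub_pow, ← mul_assoc, ← mul_assoc (1 / 2 : ℂ),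
    one_div_mul_cancel two_ne_zero, one_mul, sum_mul]
  refine sum_congr rfl fun k _ => ?_
  rw [pow_mul, hsq, neg_pow, mul_pow, ← pow_mul]
  ring

theorem stmt_4 (h : ℕ) (hh : 1 ≤ h) (a : ℝ) (N : ℕ) :
    ∑ k ∈ Finset.range (N / 2 + 1),
        (N.choose (2 * k) : ℂ) * (a : ℂ) ^ (2 * k) * (-1) ^ k * (rising h k : ℂ) /
          ((N : ℂ) + 1) ^ (h + k) =
      (1 / (Nat.factorial (h - 1) : ℂ)) *
        ∫ t : ℝ in Set.Ioi 0, (t : ℂ) ^ (h - 1) * Complex.exp (-(t : ℂ)) *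
          ((1 / 2 : ℂ) *
            (((1 + Complex.I * (a : ℂ) * (Real.sqrt t : ℂ)) * Complex.exp (-(t : ℂ))) ^ N +
             ((1 - Complex.I * (a : ℂ) * (Real.sqrt t : ℂ)) * Complex.exp (-(t : ℂ))) ^ N)) := by
  obtain ⟨n, rfl⟩ := Nat.exists_eq_add_of_le' hh
  set r : ℝ := N + 1 with hr_def
  have hr : 0 < r := by positivity
  have hfact : (n ! : ℂ) ≠ 0 := Nat.cast_ne_zero.mpr n.factorial_ne_zero
  simp only [Nat.add_sub_cancel]
  rw [setIntegral_congr_fun (g := fun t : ℝ => ∑ k ∈ range (N / 2 + 1),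
      (N.choose (2 * k) : ℂ) * a ^ (2 * k) * (-1) ^ k * ((t : ℂ) ^ (n + k) * exp (-(r * t))))
      measurableSet_Ioi fun t ht => ?pointwise,
    integral_finsetSum _ fun k _ => (integrableOn_pow_mul_exp_neg_mul_Ioi _ hr).const_mul _,
    mul_sum]
  · refine sum_congr rfl fun k _ => ?_
    rw [integral_const_mul, integral_pow_mul_exp_neg_mul_Ioi _ hr, add_right_comm n k 1,
      ← Nat.factorial_mul_ascFactorial, rising_eq_ascFactorial, hr_def]
    push_cast
    field_simp
  case pointwise =>
    have hexp : exp (-(t : ℂ)) * exp (-(t : ℂ)) ^ N = exp (-(r * t)) := by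
      rw [← exp_nat_mul, ← exp_add, hr_def]
      push_cast
      ring_nf
    rw [half_mul_add_pow_add_sub_pow_I_mul_sqrt a (le_of_lt ht), mul_sum]
    refine sum_congr rfl fun k _ => ?_
    rw [← hexp, pow_add]
    ring
end

section
/- Let f₊, f₋ : [0,∞) → ℝ be continuous with f₊(0) = 1 and f₋(0) ≠ 0, assume f₊ is differentiable at 0 (with finite derivative), and assume f₊(K) → 0 and √K · f₋(K) → 0 as K → ∞. Define D(K) = (1 - f₊(K))² − K f₋(K)². Then there exists K₀ > 0 with D(K₀) = 0. -/
/-!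
Write `D K = (1 - f₊ K)² - K f₋(K)²`. Differentiability of `f₊` at `0` makes
`(1 - f₊ K)²` of order `K²`, so `D K / K → -f₋(0)² < 0` as `K → 0⁺`: `D` is negative just to
the right of `0`. Since `K f₋(K)² = (√K f₋(K))² → 0`, `D K → 1` at infinity, and the
intermediate value theorem on `(0, ∞)` yields a positive zero of `D`.
-/

open Filter Set Topology

theorem tendsto_sq_sub_div_nhdsGT {f : ℝ → ℝ} {x d : ℝ}
    (hf : HasDerivWithinAt f d (Ici x) x) :
    Tendsto (fun y => (f x - f y) ^ 2 / (y - x)) (𝓝[>] x) (𝓝 0) := by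
  have hslope : Tendsto (slope f x) (𝓝[>] x) (𝓝 d) :=
    (hasDerivWithinAt_iff_tendsto_slope' self_notMem_Ioi).mp
      (hasDerivWithinAt_Ioi_iff_Ici.mpr hf)
  have hsub : Tendsto (fun y => y - x) (𝓝[>] x) (𝓝 0) := by
    simpa using (tendsto_id.sub_const x).mono_left (nhdsWithin_le_nhds (a := x))
  have hlim := hsub.mul (hslope.pow 2)
  rw [zero_mul] at hlim
  refine hlim.congr' ?_
  filter_upwards [self_mem_nhdsWithin] with y hy
  have hyx : y - x ≠ 0 := sub_ne_zero.mpr (ne_of_gt hy)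
  rw [slope_def_field]
  field_simp
  ring

theorem eventually_sq_sub_sub_mul_sq_neg {f g : ℝ → ℝ} {d : ℝ}
    (hf : HasDerivWithinAt f d (Ici 0) 0) (hg : ContinuousWithinAt g (Ici 0) 0) (hg0 : g 0 ≠ 0) :
    ∀ᶠ K in 𝓝[>] 0, (f 0 - f K) ^ 2 - K * g K ^ 2 < 0 := by
  have hg' : Tendsto g (𝓝[>] 0) (𝓝 (g 0)) :=
    hg.tendsto.mono_left (nhdsWithin_mono _ Ioi_subset_Ici_self)
  have hlim :
      Tendsto (fun K => (f 0 - f K) ^ 2 / K - g K ^ 2) (𝓝[>] 0) (𝓝 (0 - g 0 ^ 2)) := by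
    simpa using (tendsto_sq_sub_div_nhdsGT hf).sub (hg'.pow 2)
  have hneg : (0 : ℝ) - g 0 ^ 2 < 0 := by linarith [sq_pos_of_ne_zero hg0]
  filter_upwards [hlim.eventually (eventually_lt_nhds hneg), self_mem_nhdsWithin]
    with K hK hKpos
  rw [mem_Ioi] at hKpos
  have : ((f 0 - f K) ^ 2 - K * g K ^ 2) / K < 0 := by
    rwa [sub_div, mul_div_cancel_left₀ _ hKpos.ne']
  simpa using (div_lt_iff₀ hKpos).mp this

theorem tendsto_sq_sub_sub_mul_sq_atTop {f g : ℝ → ℝ} (c : ℝ) (hf : Tendsto f atTop (𝓝 0))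
    (hg : Tendsto (fun K => Real.sqrt K * g K) atTop (𝓝 0)) :
    Tendsto (fun K => (c - f K) ^ 2 - K * g K ^ 2) atTop (𝓝 (c ^ 2)) := by
  have hlim := ((tendsto_const_nhds (x := c)).sub hf |>.pow 2).sub (hg.pow 2)
  rw [sub_zero, zero_pow two_ne_zero, sub_zero] at hlim
  refine hlim.congr' ?_
  filter_upwards [eventually_ge_atTop 0] with K hK
  rw [mul_pow, Real.sq_sqrt hK]

theorem stmt_7 (fp fm : ℝ → ℝ)
    (hfp : ContinuousOn fp (Set.Ici 0)) (hfm : ContinuousOn fm (Set.Ici 0))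
    (hfp0 : fp 0 = 1) (hfm0 : fm 0 ≠ 0)
    (hderiv : ∃ d : ℝ, HasDerivWithinAt fp d (Set.Ici 0) 0)
    (hfptop : Tendsto fp atTop (nhds 0))
    (hfmtop : Tendsto (fun K => Real.sqrt K * fm K) atTop (nhds 0)) :
    ∃ K₀ : ℝ, 0 < K₀ ∧ (1 - fp K₀) ^ 2 - K₀ * (fm K₀) ^ 2 = 0 := by
  obtain ⟨d, hd⟩ := hderiv
  have hneg := eventually_sq_sub_sub_mul_sq_neg hd (hfm 0 self_mem_Ici) hfm0
  rw [hfp0] at hneg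
  obtain ⟨a, hDa, ha⟩ := (hneg.and self_mem_nhdsWithin).exists
  have hcont : ContinuousOn (fun K => (1 - fp K) ^ 2 - K * fm K ^ 2) (Ioi 0) :=
    (((continuousOn_const.sub hfp).pow 2).sub (continuousOn_id.mul (hfm.pow 2))).mono
      Ioi_subset_Ici_self
  have htop := tendsto_sq_sub_sub_mul_sq_atTop 1 hfptop hfmtop
  rw [one_pow] at htop
  exact isPreconnected_Ioi.intermediate_value_Ico ha (le_principal_iff.mpr (Ioi_mem_atTop 0))
    hcont htop ⟨hDa.le, one_pos⟩
end

section
/- Let a be a real number with a ≠ 0, and for N ≥ 1 set K_N = π²/(a² N²) and X_N(K) = Re[((1 + i a √K) e^{−K})^N]. Then lim_{N→∞} X_N(K_N) = −1. Consequently, for every sequence σ_N ≥ 0 of nonnegative reals, limsup_{N→∞} sup_{K ≥ 0} |X_N(K) − e^{−σ_N K}| ≥ 1. -/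
/-!
With `c = π (a / |a|) i = ±π i` one has `i a √K_N = c / N` and `N K_N → 0`, so
`((1 + i a √K_N) e^{-K_N})^N = (1 + c/N)^N e^{-N K_N} → e^c = -1`. Since every wedge value
`e^{-σ K}` is positive, at `K = K_N` the distance `|X_N(K_N) - e^{-σ K_N}|` exceeds
`-X_N(K_N) → 1`.
-/

open Filter Topology Complex

lemma Complex.exp_div_abs_mul_pi_mul_I {a : ℝ} (ha : a ≠ 0) :
    exp (↑(a / |a| * Real.pi) * I) = -1 := by
  rcases ha.lt_or_gt with h | h
  · rw [abs_of_neg h, div_neg, div_self h.ne, neg_one_mul, ofReal_neg, neg_mul, exp_neg,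
      exp_pi_mul_I]
    norm_num
  · rw [abs_of_pos h, div_self h.ne', one_mul, exp_pi_mul_I]

lemma Complex.tendsto_one_add_div_mul_exp_neg_pow (c : ℂ) {K : ℕ → ℂ}
    (hK : Tendsto (fun N : ℕ => N * K N) atTop (𝓝 0)) :
    Tendsto (fun N : ℕ => ((1 + c / N) * exp (-K N)) ^ N) atTop (𝓝 (exp c)) := by
  have hdamp : Tendsto (fun N : ℕ => exp (-(N * K N))) atTop (𝓝 1) := by
    simpa [Function.comp_def] using ((continuous_exp.comp continuous_neg).tendsto 0).comp hK
  simpa [mul_pow, ← exp_nat_mul] using (tendsto_one_add_div_pow_exp c).mul hdamp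

lemma frequently_one_sub_le_abs_sub_exp {X : ℕ → ℝ → ℝ} {k σ : ℕ → ℝ} (hk : ∀ N, 0 ≤ k N)
    (hX : Tendsto (fun N => X N (k N)) atTop (𝓝 (-1))) {ε : ℝ} (hε : 0 < ε) :
    ∃ᶠ N in atTop, ∃ K : ℝ, 0 ≤ K ∧ 1 - ε ≤ |X N K - Real.exp (-(σ N) * K)| := by
  refine Eventually.frequently ?_
  filter_upwards [hX.eventually (eventually_lt_nhds (show (-1 : ℝ) < -1 + ε by linarith))]
    with N hN
  refine ⟨k N, hk N, ?_⟩
  have hexp := Real.exp_pos (-(σ N) * k N)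
  rw [abs_sub_comm]
  exact (by linarith : 1 - ε ≤ Real.exp (-(σ N) * k N) - X N (k N)).trans (le_abs_self _)

theorem stmt_13 (a : ℝ) (ha : a ≠ 0)
    (X : ℕ → ℝ → ℝ)
    (hX : ∀ N K, X N K =
      (((1 + Complex.I * (a : ℂ) * (Real.sqrt K : ℂ)) * Complex.exp (-(K : ℂ))) ^ N).re)
    (Kseq : ℕ → ℝ)
    (hK : ∀ N : ℕ, Kseq N = Real.pi ^ 2 / (a ^ 2 * (N : ℝ) ^ 2)) :
    Tendsto (fun N : ℕ => X N (Kseq N)) atTop (nhds (-1)) ∧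
    ∀ σ : ℕ → ℝ, (∀ N, 0 ≤ σ N) → ∀ ε : ℝ, 0 < ε →
      ∃ᶠ N : ℕ in atTop, ∃ K : ℝ, 0 ≤ K ∧
        1 - ε ≤ |X N K - Real.exp (-(σ N) * K)| := by
  have hNK : Tendsto (fun N : ℕ => (N : ℂ) * (Kseq N : ℂ)) atTop (𝓝 0) := by
    have hreal : Tendsto (fun N : ℕ => (N : ℝ) * Kseq N) atTop (𝓝 0) := by
      refine (tendsto_const_div_atTop_nhds_zero_nat (Real.pi ^ 2 / a ^ 2)).congr' ?_
      filter_upwards [eventually_ne_atTop 0] with N hN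
      rw [hK]
      field_simp
    simpa [Function.comp_def] using (continuous_ofReal.tendsto 0).comp hreal
  have hcoef : ∀ N : ℕ, I * a * (√(Kseq N) : ℂ) = ↑(a / |a| * Real.pi) * I / N := by
    intro N
    have hsqrt : √(Kseq N) = Real.pi / (|a| * N) := by
      rw [hK, ← sq_abs a, ← mul_pow, ← div_pow, Real.sqrt_sq (by positivity)]
    rw [hsqrt]
    push_cast
    ring
  have hlim : Tendsto (fun N : ℕ => X N (Kseq N)) atTop (𝓝 (-1)) := by
    have := (continuous_re.tendsto _).comp
      (tendsto_one_add_div_mul_exp_neg_pow (↑(a / |a| * Real.pi) * I) hNK)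
    rw [exp_div_abs_mul_pi_mul_I ha] at this
    simpa [Function.comp_def, hX, hcoef] using this
  exact ⟨hlim, fun σ _ ε hε => frequently_one_sub_le_abs_sub_exp
    (fun N => hK N ▸ by positivity) hlim hε⟩
end

section
/- Let A be a ℤ/2-graded associative unital algebra over ℂ with an odd derivation Q satisfying Q² = 0 (i.e. Q(xy) = Q(x)y + (−1)^{|x|} x Q(y) for homogeneous x). Suppose K ∈ A is even, B, c ∈ A are odd, with relations B² = 0, c² = 0, Bc + cB = 1, KB = BK, and Q-action QK = 0, QB = K, Qc = cKc. Let f be an element of the commutative unital subalgebra generated by K such that 1 − f is invertible in that subalgebra. Then Ψ = c · (KB(1−f)^{−1}) · c · f satisfies QΨ + Ψ² = 0. -/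
/-!
Put `h = K g`, so that `KBg = Bh` and `Ψ = c B h c f`. Using `cB = 1 - Bc`, `B² = 0` and the fact
that `K`, `f`, `g` commute with `B` and with each other, both `QΨ` and `Ψ²` become left multiples
of `cB`, and collecting terms gives `QΨ + Ψ² = c B h c K (1 - (1 - f) g) c f = 0`.
-/

section EvenCycles

variable {A : Type*} [Ring A] [Algebra ℂ A] (A₀ : Submodule ℂ A) (Q : A →ₗ[ℂ] A)
  (hone : (1 : A) ∈ A₀) (h00 : ∀ x ∈ A₀, ∀ y ∈ A₀, x * y ∈ A₀)
  (hLeibEven : ∀ x ∈ A₀, ∀ y : A, Q (x * y) = Q x * y + x * Q y)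

include hone hLeibEven in
theorem map_one_eq_zero_of_leibniz : Q 1 = 0 := by
  simpa using hLeibEven 1 hone 1

def evenCycles : Subalgebra ℂ A where
  carrier := {x | x ∈ A₀ ∧ Q x = 0}
  mul_mem' := fun ⟨hx, hQx⟩ ⟨hy, hQy⟩ =>
    ⟨h00 _ hx _ hy, by rw [hLeibEven _ hx, hQx, hQy, zero_mul, mul_zero, add_zero]⟩
  add_mem' := fun ⟨hx, hQx⟩ ⟨hy, hQy⟩ => ⟨A₀.add_mem hx hy, by rw [map_add, hQx, hQy, add_zero]⟩
  algebraMap_mem' r := by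
    rw [Algebra.algebraMap_eq_smul_one]
    exact ⟨A₀.smul_mem r hone, by rw [map_smul, map_one_eq_zero_of_leibniz A₀ Q hone hLeibEven,
      smul_zero]⟩

theorem adjoin_singleton_le_evenCycles {K : A} (hK : K ∈ A₀) (hQK : Q K = 0) :
    Algebra.adjoin ℂ {K} ≤ evenCycles A₀ Q hone h00 hLeibEven :=
  Algebra.adjoin_le (Set.singleton_subset_iff.mpr ⟨hK, hQK⟩)

end EvenCycles

theorem adjoin_singleton_le_centralizer_pair {A : Type*} [Ring A] [Algebra ℂ A] {K B : A}
    (hKB : K * B = B * K) :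
    Algebra.adjoin ℂ {K} ≤ Subalgebra.centralizer ℂ {K, B} :=
  Algebra.adjoin_le <| Set.singleton_subset_iff.mpr <| by
    rintro x (rfl | rfl)
    exacts [rfl, hKB.symm]

theorem okawa_identity {R : Type*} [Ring R] {K B c f g : R}
    (hB2 : B * B = 0) (hBc : B * c + c * B = 1) (hKB : Commute K B) (hKf : Commute K f)
    (hKg : Commute K g) (hBf : Commute B f) (hBg : Commute B g)
    (hfg : (1 - f) * g = 1) (hgf : g * (1 - f) = 1) :
    c * K * c * (K * (B * (g * (c * f)))) - c * (K * (K * (g * (c * f)) - B * (g * (c * K * c * f))))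
      + c * (K * B * g) * c * f * (c * (K * B * g) * c * f) = 0 := by
  have hBB (x : R) : B * (B * x) = 0 := by rw [← mul_assoc, hB2, zero_mul]
  have hcB (x : R) : c * (B * x) = x - B * (c * x) := by
    rw [← mul_assoc, eq_sub_of_add_eq' hBc, sub_mul, one_mul, mul_assoc]
  have hfg' (x : R) : f * (g * x) = g * x - x := by
    rw [← mul_assoc, show f * g = g - 1 by rw [← hfg]; noncomm_ring, sub_mul, one_mul]
  have hgf' (x : R) : g * (f * x) = g * x - x := by
    rw [← mul_assoc, show g * f = g - 1 by rw [← hgf]; noncomm_ring, sub_mul, one_mul]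
  simp only [mul_assoc, mul_sub, sub_mul, hBB, hcB, hKB.eq, hKB.left_comm, hKg.eq, hKg.left_comm,
    hKf.left_comm, hBf.symm.left_comm, hBg.symm.left_comm, hfg', hgf']
  noncomm_ring

theorem stmt_15_general (A : Type*) [Ring A] [Algebra ℂ A]
    (A₀ A₁ : Submodule ℂ A)
    -- ℤ/2-grading data: decomposition and multiplicative structure
    (hone : (1 : A) ∈ A₀)
    (h00 : ∀ x ∈ A₀, ∀ y ∈ A₀, x * y ∈ A₀)
    -- Q is an odd ℂ-linear derivation squaring to zero
    (Q : A →ₗ[ℂ] A)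
    (hLeibEven : ∀ x ∈ A₀, ∀ y : A, Q (x * y) = Q x * y + x * Q y)
    (hLeibOdd : ∀ x ∈ A₁, ∀ y : A, Q (x * y) = Q x * y - x * Q y)
    -- the elements K, B, c and their relations
    (K B c : A)
    (hK : K ∈ A₀) (hB : B ∈ A₁) (hc : c ∈ A₁)
    (hB2 : B * B = 0) (hBc : B * c + c * B = 1)
    (hKB : K * B = B * K)
    (hQK : Q K = 0) (hQB : Q B = K) (hQc : Q c = c * K * c)
    -- f in the subalgebra generated by K, with 1 - f invertible there
    (f g : A) (hf : f ∈ Algebra.adjoin ℂ ({K} : Set A))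
    (hg : g ∈ Algebra.adjoin ℂ ({K} : Set A))
    (hginv : (1 - f) * g = 1 ∧ g * (1 - f) = 1) :
    Q (c * (K * B * g) * c * f) + (c * (K * B * g) * c * f) * (c * (K * B * g) * c * f) = 0 := by
  have hcycles := adjoin_singleton_le_evenCycles A₀ Q hone h00 hLeibEven hK hQK
  obtain ⟨-, hQf⟩ := hcycles hf
  obtain ⟨hg₀, hQg⟩ := hcycles hg
  have hfc := adjoin_singleton_le_centralizer_pair hKB hf
  have hgc := adjoin_singleton_le_centralizer_pair hKB hg
  have hQΨ : Q (c * (K * B * g) * c * f) = c * K * c * (K * (B * (g * (c * f))))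
      - c * (K * (K * (g * (c * f)) - B * (g * (c * K * c * f)))) := by
    simp only [mul_assoc]
    rw [hLeibOdd c hc, hLeibEven K hK, hLeibOdd B hB, hLeibEven g hg₀, hLeibOdd c hc, hQK, hQB,
      hQc, hQg, hQf]
    simp only [mul_assoc, zero_mul, zero_add, mul_zero, sub_zero]
  rw [hQΨ]
  exact okawa_identity hB2 hBc hKB (hfc K (by simp)) (hgc K (by simp)) (hfc B (by simp))
    (hgc B (by simp)) hginv.1 hginv.2

theorem stmt_15 (A : Type*) [Ring A] [Algebra ℂ A]
    (A₀ A₁ : Submodule ℂ A)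
    -- ℤ/2-grading data: decomposition and multiplicative structure
    (hdecomp : A₀ ⊔ A₁ = ⊤)
    (hone : (1 : A) ∈ A₀)
    (h00 : ∀ x ∈ A₀, ∀ y ∈ A₀, x * y ∈ A₀)
    (h01 : ∀ x ∈ A₀, ∀ y ∈ A₁, x * y ∈ A₁)
    (h10 : ∀ x ∈ A₁, ∀ y ∈ A₀, x * y ∈ A₁)
    (h11 : ∀ x ∈ A₁, ∀ y ∈ A₁, x * y ∈ A₀)
    -- Q is an odd ℂ-linear derivation squaring to zero
    (Q : A →ₗ[ℂ] A)
    (hQ2 : ∀ x, Q (Q x) = 0)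
    (hQA₀ : ∀ x ∈ A₀, Q x ∈ A₁) (hQA₁ : ∀ x ∈ A₁, Q x ∈ A₀)
    (hLeibEven : ∀ x ∈ A₀, ∀ y : A, Q (x * y) = Q x * y + x * Q y)
    (hLeibOdd : ∀ x ∈ A₁, ∀ y : A, Q (x * y) = Q x * y - x * Q y)
    -- the elements K, B, c and their relations
    (K B c : A)
    (hK : K ∈ A₀) (hB : B ∈ A₁) (hc : c ∈ A₁)
    (hB2 : B * B = 0) (hc2 : c * c = 0) (hBc : B * c + c * B = 1)
    (hKB : K * B = B * K)
    (hQK : Q K = 0) (hQB : Q B = K) (hQc : Q c = c * K * c)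
    -- f in the subalgebra generated by K, with 1 - f invertible there
    (f g : A) (hf : f ∈ Algebra.adjoin ℂ ({K} : Set A))
    (hg : g ∈ Algebra.adjoin ℂ ({K} : Set A))
    (hginv : (1 - f) * g = 1 ∧ g * (1 - f) = 1) :
    Q (c * (K * B * g) * c * f) + (c * (K * B * g) * c * f) * (c * (K * B * g) * c * f) = 0 :=
  stmt_15_general A A₀ A₁ hone h00 Q hLeibEven hLeibOdd K B c hK hB hc hB2 hBc hKB hQK hQB hQc f g
    hf hg hginv
end
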